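/- arXiv:1406.2522 — 3 statements merged into one kernel-verified Lean document; each statement's English description precedes it below -/
import Mathlib

section
/- Let n be a positive integer and let A ∈ M_n(ℂ) be a unital Schur matrix, i.e., all diagonal entries of A equal 1. Then the Schur map S_A is multiplicative if and only if there exists a function f : Fin n → ℂ with f(i) ≠ 0 for all i such that A_{ij} = f(i)/f(j) for all i, j. Moreover, in that case, for every B ∈ M_n(ℂ) one has A ∘ B = D B D^{-1}, where D is the invertible diagonal matrix with diagonal entries f(1), …, f(n). -/
/-!
If `B ↦ A ⊙ B` is multiplicative, testing it on matrix units `E_ik * E_kj = E_ij` gives the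
cocycle identity `A i j = A i k * A k j`. With a unit diagonal this forces `A k i * A i k = 1`,
so fixing a base index `k` and putting `f i = A i k` yields `A i j = f i / f j`. Conversely,
such an `A` acts as conjugation by `D = diagonal f`, which is multiplicative.
-/

namespace Matrix

theorem hadamard_single {m n α : Type*} [DecidableEq m] [DecidableEq n] [MulZeroClass α]
    (A : Matrix m n α) (a : m) (b : n) (c : α) :
    A ⊙ single a b c = single a b (A a b * c) := by
  ext i j
  by_cases hi : a = i <;> by_cases hj : b = j <;> simp [hi, hj]

variable {ι K : Type*} [Fintype ι] [DecidableEq ι] [Field K]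

theorem apply_eq_apply_mul_apply_of_hadamard_mul {A : Matrix ι ι K}
    (h : ∀ B C : Matrix ι ι K, A ⊙ (B * C) = A ⊙ B * A ⊙ C) (i j k : ι) :
    A i j = A i k * A k j := by
  have := congr_fun₂ (h (single i k 1) (single k j 1)) i j
  simpa [hadamard_single, single_mul_single_same] using this

theorem exists_ratio_of_hadamard_mul {A : Matrix ι ι K} (hdiag : ∀ i, A i i = 1)
    (h : ∀ B C : Matrix ι ι K, A ⊙ (B * C) = A ⊙ B * A ⊙ C) :
    ∃ f : ι → K, (∀ i, f i ≠ 0) ∧ ∀ i j, A i j = f i / f j := by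
  rcases isEmpty_or_nonempty ι with hι | ⟨⟨k⟩⟩
  · exact ⟨fun _ => 1, fun _ => one_ne_zero, fun i => isEmptyElim i⟩
  have cocycle := apply_eq_apply_mul_apply_of_hadamard_mul h
  have hinv (i : ι) : A i k * A k i = 1 := by rw [← cocycle, hdiag]
  have hne (i : ι) : A i k ≠ 0 := left_ne_zero_of_mul_eq_one (hinv i)
  refine ⟨fun i => A i k, hne, fun i j => ?_⟩
  rw [eq_div_iff (hne j), cocycle i j k, mul_assoc, mul_comm (A k j), hinv, mul_one]

theorem diagonal_mul_diagonal_inv {f : ι → K} (hf : ∀ i, f i ≠ 0) :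
    diagonal f * diagonal (fun i => (f i)⁻¹) = 1 := by
  rw [diagonal_mul_diagonal, ← diagonal_one]
  exact congr_arg diagonal (funext fun i => mul_inv_cancel₀ (hf i))

theorem isUnit_diagonal_of_ne_zero {f : ι → K} (hf : ∀ i, f i ≠ 0) :
    IsUnit (diagonal f) :=
  isUnit_diagonal.mpr (Pi.isUnit_iff.mpr fun i => (hf i).isUnit)

theorem hadamard_eq_diagonal_mul_mul_inv {A : Matrix ι ι K} {f : ι → K} (hf : ∀ i, f i ≠ 0)
    (hA : ∀ i j, A i j = f i / f j) (B : Matrix ι ι K) :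
    A ⊙ B = diagonal f * B * (diagonal f)⁻¹ := by
  rw [inv_eq_right_inv (diagonal_mul_diagonal_inv hf)]
  ext i j
  simp only [hadamard_apply, mul_diagonal, diagonal_mul, hA]
  ring

theorem hadamard_mul_of_ratio {A : Matrix ι ι K} {f : ι → K} (hf : ∀ i, f i ≠ 0)
    (hA : ∀ i j, A i j = f i / f j) (B C : Matrix ι ι K) :
    A ⊙ (B * C) = A ⊙ B * A ⊙ C := by
  have hD := (isUnit_iff_isUnit_det _).mp (isUnit_diagonal_of_ne_zero hf)
  simp only [hadamard_eq_diagonal_mul_mul_inv hf hA, Matrix.mul_assoc,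
    nonsing_inv_mul_cancel_left _ _ hD]

end Matrix

open Matrix

theorem unital_schur_multiplicative_iff_ratio_general (n : ℕ)
    (A : Matrix (Fin n) (Fin n) ℂ) (hdiag : ∀ i, A i i = 1) :
    ((∀ B C : Matrix (Fin n) (Fin n) ℂ,
        Matrix.hadamard A (B * C) = Matrix.hadamard A B * Matrix.hadamard A C) ↔
      ∃ f : Fin n → ℂ, (∀ i, f i ≠ 0) ∧ ∀ i j, A i j = f i / f j) ∧
    ((∀ B C : Matrix (Fin n) (Fin n) ℂ,
        Matrix.hadamard A (B * C) = Matrix.hadamard A B * Matrix.hadamard A C) →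
      ∃ f : Fin n → ℂ, (∀ i, f i ≠ 0) ∧ (∀ i j, A i j = f i / f j) ∧
        IsUnit (Matrix.diagonal f) ∧
        ∀ B : Matrix (Fin n) (Fin n) ℂ,
          Matrix.hadamard A B = Matrix.diagonal f * B * (Matrix.diagonal f)⁻¹) := by
  refine ⟨⟨exists_ratio_of_hadamard_mul hdiag, fun ⟨f, hf, hA⟩ => hadamard_mul_of_ratio hf hA⟩,
    fun h => ?_⟩
  obtain ⟨f, hf, hA⟩ := exists_ratio_of_hadamard_mul hdiag h
  exact ⟨f, hf, hA, isUnit_diagonal_of_ne_zero hf, hadamard_eq_diagonal_mul_mul_inv hf hA⟩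

theorem unital_schur_multiplicative_iff_ratio (n : ℕ) (hn : 0 < n)
    (A : Matrix (Fin n) (Fin n) ℂ) (hdiag : ∀ i, A i i = 1) :
    ((∀ B C : Matrix (Fin n) (Fin n) ℂ,
        Matrix.hadamard A (B * C) = Matrix.hadamard A B * Matrix.hadamard A C) ↔
      ∃ f : Fin n → ℂ, (∀ i, f i ≠ 0) ∧ ∀ i j, A i j = f i / f j) ∧
    ((∀ B C : Matrix (Fin n) (Fin n) ℂ,
        Matrix.hadamard A (B * C) = Matrix.hadamard A B * Matrix.hadamard A C) →
      ∃ f : Fin n → ℂ, (∀ i, f i ≠ 0) ∧ (∀ i j, A i j = f i / f j) ∧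
        IsUnit (Matrix.diagonal f) ∧
        ∀ B : Matrix (Fin n) (Fin n) ℂ,
          Matrix.hadamard A B = Matrix.diagonal f * B * (Matrix.diagonal f)⁻¹) :=
  unital_schur_multiplicative_iff_ratio_general n A hdiag
end

section
/- Let n be a positive integer and let A ∈ M_n(ℂ) be a nonzero matrix such that the Schur map S_A is multiplicative. Then the following are equivalent: (1) S_A is *-preserving, i.e., S_A(B*) = S_A(B)* for all B (equivalently A is Hermitian); (2) ‖A‖ = n, where ‖·‖ is the spectral norm; (3) (1/n)·A is an orthogonal projection, i.e., ((1/n)A)² = (1/n)A and ((1/n)A)* = (1/n)A; (4) the operator norm of S_A as a linear map on M_n(ℂ) with the spectral norm equals 1. -/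
/-!
Testing multiplicativity of `B ↦ A ⊙ B` on matrix units gives `A i j = A i k * A k j`. For
`A ≠ 0` this forces `A i i = 1` and `A * A = n • A`, so `P = n⁻¹ • A` is a nonzero idempotent,
and `A ⊙ B = D * B * D'` with `D = diagonal (A · k)`, `D' = diagonal (A k ·)`. Every condition is
then equivalent to `A` being Hermitian: in a C⋆-algebra an idempotent is self-adjoint exactly
when its norm is at most one (if `‖p‖ ≤ 1` then `x = p⋆ p - p` has `x⋆ x = p⋆ (p p⋆ - 1) p ≤ 0`),
and for Hermitian `A` one has `D' = D⋆` with `D` unitary, so `B ↦ A ⊙ B` is an isometry.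
-/

section CStarAlgebra

variable {E : Type*} [CStarAlgebra E] [PartialOrder E] [StarOrderedRing E] {p : E}

local postfix:max "⋆" => star

theorem IsIdempotentElem.isSelfAdjoint_of_norm_le_one (hp : IsIdempotentElem p)
    (h : ‖p‖ ≤ 1) : IsSelfAdjoint p := by
  have hpp : p * p⋆ ≤ 1 := by
    rw [← CStarAlgebra.norm_le_one_iff_of_nonneg _ (mul_star_self_nonneg p),
      CStarRing.norm_self_mul_star]
    nlinarith [norm_nonneg p]
  set x := p⋆ * p - p
  have hx : x⋆ * x = p⋆ * (p * p⋆ - 1) * p :=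
    calc x⋆ * x = p⋆ * p * p⋆ * p - p⋆ * (p * p) - p⋆ * p⋆ * p + p⋆ * p := by
          simp only [x, star_sub, star_mul, star_star]
          noncomm_ring
      _ = p⋆ * (p * p⋆ - 1) * p := by
          rw [hp.eq, hp.star.eq]
          noncomm_ring
  have hx0 : x⋆ * x = 0 := by
    refine le_antisymm ?_ (star_mul_self_nonneg x)
    simpa [hx] using star_left_conjugate_le_conjugate (sub_nonpos.mpr hpp) p
  have hstar_mul : p⋆ * p = p := sub_eq_zero.mp ((CStarRing.star_mul_self_eq_zero_iff x).mp hx0)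
  rw [IsSelfAdjoint, ← hstar_mul, star_mul, star_star]

theorem IsIdempotentElem.one_le_norm {R : Type*} [NormedRing R] {e : R}
    (he : IsIdempotentElem e) (h0 : e ≠ 0) : 1 ≤ ‖e‖ :=
  le_of_mul_le_mul_left (by simpa [he.eq] using norm_mul_le e e) (norm_pos_iff.mpr h0)

theorem IsIdempotentElem.norm_le_one_iff (hp : IsIdempotentElem p) :
    ‖p‖ ≤ 1 ↔ IsSelfAdjoint p :=
  ⟨hp.isSelfAdjoint_of_norm_le_one, fun h => IsStarProjection.norm_le p ⟨hp, h⟩⟩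

theorem IsIdempotentElem.norm_eq_one_iff (hp : IsIdempotentElem p) (h0 : p ≠ 0) :
    ‖p‖ = 1 ↔ IsSelfAdjoint p := by
  rw [← hp.norm_le_one_iff]
  exact ⟨le_of_eq, fun h => le_antisymm h (hp.one_le_norm h0)⟩

end CStarAlgebra

namespace Matrix

variable {ι R : Type*}

theorem nonempty_of_ne_zero [Zero R] {A : Matrix ι ι R} (h0 : A ≠ 0) : Nonempty ι :=
  (Function.ne_iff.mp h0).nonempty

theorem apply_eq_mul_apply_of_hadamard_mul [Fintype ι] [DecidableEq ι] [Semiring R]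
    {A : Matrix ι ι R} (h : ∀ B C : Matrix ι ι R, A ⊙ (B * C) = A ⊙ B * A ⊙ C) (i j k : ι) :
    A i j = A i k * A k j := by
  simpa [hadamard_apply, single_apply, mul_apply] using
    congr_fun₂ (h (single i k 1) (single k j 1)) i j

theorem apply_self_eq_one_of_apply_eq_mul [MonoidWithZero R] [IsCancelMulZero R]
    {A : Matrix ι ι R} (hA : ∀ i j k, A i j = A i k * A k j) (h0 : A ≠ 0) (k : ι) :
    A k k = 1 := by
  obtain ⟨i, j, hij⟩ : ∃ i j, A i j ≠ 0 := by
    by_contra! h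
    exact h0 (Matrix.ext h)
  have hik : A i k ≠ 0 := left_ne_zero_of_mul (hA i j k ▸ hij)
  simpa [hik] using (hA i k k).symm

theorem mul_self_eq_card_smul_of_apply_eq_mul [Fintype ι] [Semiring R] {A : Matrix ι ι R}
    (hA : ∀ i j k, A i j = A i k * A k j) : A * A = (Fintype.card ι : R) • A := by
  ext i j
  simp [mul_apply, ← hA]

theorem hadamard_eq_diagonal_mul_mul_diagonal [Fintype ι] [DecidableEq ι] [CommSemiring R]
    {A : Matrix ι ι R} (hA : ∀ i j k, A i j = A i k * A k j) (k : ι) (B : Matrix ι ι R) :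
    A ⊙ B = diagonal (fun i => A i k) * B * diagonal (fun j => A k j) := by
  ext i j
  simp [hadamard_apply, hA i j k]
  ring

theorem forall_hadamard_conjTranspose_iff [CommSemiring R] [StarRing R] {A : Matrix ι ι R} :
    (∀ B, A ⊙ Bᴴ = (A ⊙ B)ᴴ) ↔ A.IsHermitian := by
  refine ⟨fun h => ?_, fun hA B => ?_⟩
  · ext i j
    simpa using (congr_fun₂ (h (of fun _ _ => 1)) i j).symm
  · ext i j
    simp [hadamard_apply, ← hA.apply i j]

theorem isSelfAdjoint_inv_card_smul_iff [Fintype ι] [Nonempty ι] [Field R] [StarRing R]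
    [CharZero R] {A : Matrix ι ι R} :
    IsSelfAdjoint ((Fintype.card ι : R)⁻¹ • A) ↔ A.IsHermitian := by
  rw [isHermitian_iff_isSelfAdjoint]
  exact IsSelfAdjoint.smul_iff (IsSelfAdjoint.natCast _).inv₀
    (isUnit_iff_ne_zero.mpr (inv_ne_zero (Nat.cast_ne_zero.mpr Fintype.card_ne_zero)))

theorem isIdempotentElem_inv_card_smul_of_apply_eq_mul [Fintype ι] [Nonempty ι] [Field R]
    [CharZero R] {A : Matrix ι ι R} (hA : ∀ i j k, A i j = A i k * A k j) :
    IsIdempotentElem ((Fintype.card ι : R)⁻¹ • A) := by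
  have hcard : (Fintype.card ι : R) ≠ 0 := Nat.cast_ne_zero.mpr Fintype.card_ne_zero
  rw [IsIdempotentElem, smul_mul_smul, mul_self_eq_card_smul_of_apply_eq_mul hA, smul_smul,
    inv_mul_cancel_right₀ hcard]

theorem isStarProjection_inv_card_smul_iff_of_apply_eq_mul [Fintype ι] [Nonempty ι] [Field R]
    [StarRing R] [CharZero R] {A : Matrix ι ι R} (hA : ∀ i j k, A i j = A i k * A k j) :
    IsStarProjection ((Fintype.card ι : R)⁻¹ • A) ↔ A.IsHermitian := by
  rw [isStarProjection_iff, isSelfAdjoint_inv_card_smul_iff]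
  exact and_iff_right (isIdempotentElem_inv_card_smul_of_apply_eq_mul hA)

section L2OpNorm

open scoped Matrix.Norms.L2Operator MatrixOrder

variable [Fintype ι] [DecidableEq ι] {A : Matrix ι ι ℂ} (hA : ∀ i j k, A i j = A i k * A k j)
include hA

theorem norm_inv_card_smul_le_one_iff_of_apply_eq_mul [Nonempty ι] :
    ‖(Fintype.card ι : ℂ)⁻¹ • A‖ ≤ 1 ↔ A.IsHermitian :=
  (isIdempotentElem_inv_card_smul_of_apply_eq_mul hA).norm_le_one_iff.trans
    isSelfAdjoint_inv_card_smul_iff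

variable (h0 : A ≠ 0)
include h0

theorem norm_eq_card_iff_of_apply_eq_mul :
    ‖A‖ = Fintype.card ι ↔ A.IsHermitian := by
  have := nonempty_of_ne_zero h0
  have hcard : (Fintype.card ι : ℂ) ≠ 0 := Nat.cast_ne_zero.mpr Fintype.card_ne_zero
  have hP := isIdempotentElem_inv_card_smul_of_apply_eq_mul hA
  rw [← isSelfAdjoint_inv_card_smul_iff, ← hP.norm_eq_one_iff (smul_ne_zero (inv_ne_zero hcard) h0),
    norm_smul, norm_inv, Complex.norm_natCast, inv_mul_eq_one₀ (by positivity), eq_comm]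

theorem norm_hadamard_of_isHermitian (hH : A.IsHermitian) (B : Matrix ι ι ℂ) :
    ‖A ⊙ B‖ = ‖B‖ := by
  obtain ⟨k⟩ := nonempty_of_ne_zero h0
  have hD : (diagonal fun i => A i k) ∈ unitaryGroup ι ℂ := by
    rw [mem_unitaryGroup_iff, star_eq_conjTranspose, diagonal_conjTranspose,
      diagonal_mul_diagonal]
    convert diagonal_one with i
    simp [hH.apply, ← hA, apply_self_eq_one_of_apply_eq_mul hA h0]
  have hD' : diagonal (fun j => A k j) = star (diagonal fun i => A i k) := by
    simp [star_eq_conjTranspose, diagonal_conjTranspose, hH.apply]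
  rw [hadamard_eq_diagonal_mul_mul_diagonal hA k, hD',
    CStarRing.norm_mul_mem_unitary _ (Unitary.star_mem hD), CStarRing.norm_mem_unitary_mul _ hD]

theorem sSup_norm_hadamard_eq_one_iff_of_apply_eq_mul :
    sSup ((fun B => ‖A ⊙ B‖) '' {B | ‖B‖ ≤ 1}) = 1 ↔ A.IsHermitian := by
  have := nonempty_of_ne_zero h0
  constructor
  · intro h
    -- `sSup` of a set that is not bounded above is `0`.
    have hbdd : BddAbove ((fun B => ‖A ⊙ B‖) '' {B | ‖B‖ ≤ 1}) := by
      by_contra hb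
      rw [Real.sSup_of_not_bddAbove hb] at h
      exact zero_ne_one h
    set J : Matrix ι ι ℂ := of fun _ _ => 1
    have hJ : ‖(Fintype.card ι : ℂ)⁻¹ • J‖ ≤ 1 :=
      (norm_inv_card_smul_le_one_iff_of_apply_eq_mul (by simp [J])).mpr (by ext; simp [J])
    have hAJ : A ⊙ ((Fintype.card ι : ℂ)⁻¹ • J) = (Fintype.card ι : ℂ)⁻¹ • A := by
      ext
      simp [J, mul_comm]
    rw [← norm_inv_card_smul_le_one_iff_of_apply_eq_mul hA, ← hAJ, ← h]
    exact le_csSup hbdd (Set.mem_image_of_mem _ hJ)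
  · intro hH
    simp_rw [norm_hadamard_of_isHermitian hA h0 hH]
    refine IsGreatest.csSup_eq ⟨⟨1, by simp, CStarRing.norm_one⟩, ?_⟩
    rintro _ ⟨B, hB, rfl⟩
    exact hB

end L2OpNorm

end Matrix

open Matrix

theorem schur_multiplicative_star_tfae_general (n : ℕ)
    (A : Matrix (Fin n) (Fin n) ℂ) (hA : A ≠ 0)
    (hmul : ∀ B C : Matrix (Fin n) (Fin n) ℂ,
      Matrix.hadamard A (B * C) = Matrix.hadamard A B * Matrix.hadamard A C) :
    [(∀ B : Matrix (Fin n) (Fin n) ℂ,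
        Matrix.hadamard A Bᴴ = (Matrix.hadamard A B)ᴴ),
      ‖Matrix.toEuclideanCLM (𝕜 := ℂ) A‖ = n,
      (((1 / (n : ℂ)) • A) * ((1 / (n : ℂ)) • A) = (1 / (n : ℂ)) • A ∧
        ((1 / (n : ℂ)) • A)ᴴ = (1 / (n : ℂ)) • A),
      sSup ((fun B : Matrix (Fin n) (Fin n) ℂ =>
          ‖Matrix.toEuclideanCLM (𝕜 := ℂ) (Matrix.hadamard A B)‖) ''
        {B | ‖Matrix.toEuclideanCLM (𝕜 := ℂ) B‖ ≤ 1}) = 1].TFAE := by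
  have := nonempty_of_ne_zero hA
  have hcocycle := apply_eq_mul_apply_of_hadamard_mul hmul
  have hnorm := norm_eq_card_iff_of_apply_eq_mul hcocycle hA
  have hproj := isStarProjection_inv_card_smul_iff_of_apply_eq_mul (R := ℂ) hcocycle
  have hsup := sSup_norm_hadamard_eq_one_iff_of_apply_eq_mul hcocycle hA
  rw [Fintype.card_fin] at hnorm hproj
  rw [← one_div, isStarProjection_iff] at hproj
  -- The matrix L2 operator norm is by definition the norm of `toEuclideanCLM`.
  tfae_have 1 ↔ 2 := forall_hadamard_conjTranspose_iff.trans hnorm.symm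
  tfae_have 1 ↔ 3 := forall_hadamard_conjTranspose_iff.trans hproj.symm
  tfae_have 1 ↔ 4 := forall_hadamard_conjTranspose_iff.trans hsup.symm
  tfae_finish

theorem schur_multiplicative_star_tfae (n : ℕ) (hn : 0 < n)
    (A : Matrix (Fin n) (Fin n) ℂ) (hA : A ≠ 0)
    (hmul : ∀ B C : Matrix (Fin n) (Fin n) ℂ,
      Matrix.hadamard A (B * C) = Matrix.hadamard A B * Matrix.hadamard A C) :
    [(∀ B : Matrix (Fin n) (Fin n) ℂ,
        Matrix.hadamard A Bᴴ = (Matrix.hadamard A B)ᴴ),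
      ‖Matrix.toEuclideanCLM (𝕜 := ℂ) A‖ = n,
      (((1 / (n : ℂ)) • A) * ((1 / (n : ℂ)) • A) = (1 / (n : ℂ)) • A ∧
        ((1 / (n : ℂ)) • A)ᴴ = (1 / (n : ℂ)) • A),
      sSup ((fun B : Matrix (Fin n) (Fin n) ℂ =>
          ‖Matrix.toEuclideanCLM (𝕜 := ℂ) (Matrix.hadamard A B)‖) ''
        {B | ‖Matrix.toEuclideanCLM (𝕜 := ℂ) B‖ ≤ 1}) = 1].TFAE :=
  schur_multiplicative_star_tfae_general n A hA hmul
end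

section
/- Let n be a positive integer. The set of matrices A ∈ M_n(ℝ) such that A is positive semidefinite and the Schur map S_A is multiplicative has exactly 2^{n−1} elements. -/
/-!
Testing multiplicativity of `S_A` on matrix units `E_ik`, `E_kj` shows that it holds exactly when
`A i j = A i k * A k j` for all `i, j, k`. For symmetric `A ≠ 0` this forces `A i i = 1`, so `A = v vᵀ`
where `v` is any row of `A`, a vector of signs; conversely every `v vᵀ` with `v` a sign vector is
positive semidefinite and Schur-multiplicative. As `v` and `-v` give the same matrix, normalising
`v i₀ = 1` leaves `2 ^ (n - 1)` matrices.
-/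

open Matrix

namespace Matrix

variable {ι R : Type*}

def IsSchurMultiplicative [Fintype ι] [Mul R] [AddCommMonoid R] (A : Matrix ι ι R) : Prop :=
  ∀ B C : Matrix ι ι R, A ⊙ (B * C) = A ⊙ B * A ⊙ C

theorem isSchurMultiplicative_iff [Fintype ι] [DecidableEq ι] [CommSemiring R]
    {A : Matrix ι ι R} : A.IsSchurMultiplicative ↔ ∀ i j k, A i j = A i k * A k j := by
  constructor
  · intro hA i j k
    have h := congr_fun₂ (hA (single i k 1) (single k j 1)) i j
    simpa [hadamard_apply, mul_apply, single_apply, Finset.sum_ite_eq'] using h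
  · intro hA B C
    ext i j
    simp only [hadamard_apply, mul_apply, Finset.mul_sum]
    refine Finset.sum_congr rfl fun k _ => ?_
    rw [hA i j k]
    ring

section Factorization

variable [CommRing R] {A : Matrix ι ι R}

theorem diag_eq_one_of_forall_eq_mul [NoZeroDivisors R] (hS : A.IsSymm)
    (hA : ∀ i j k, A i j = A i k * A k j) (hA0 : A ≠ 0) (i : ι) : A i i = 1 := by
  have row_sq : ∀ k, A i k * A i k = A i i := fun k => by rw [hA i i k, hS.apply k i]
  have hii : A i i ≠ 0 := by
    intro h0
    have row_zero : ∀ k, A i k = 0 := fun k => mul_self_eq_zero.mp ((row_sq k).trans h0)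
    refine hA0 (ext fun k j => ?_)
    rw [hA k j i, hS.apply i k, row_zero, zero_mul, zero_apply]
  exact mul_left_cancel₀ hii (by rw [mul_one, ← hA i i i])

theorem eq_vecMulVec_row_of_forall_eq_mul (hS : A.IsSymm) (hA : ∀ i j k, A i j = A i k * A k j)
    (i₀ : ι) : A = vecMulVec (A i₀) (A i₀) := by
  ext i j
  rw [vecMulVec_apply, hA i j i₀, hS.apply i i₀]

theorem isSchurMultiplicative_vecMulVec_self [Fintype ι] [DecidableEq ι] {v : ι → R}
    (hv : ∀ i, v i * v i = 1) : (vecMulVec v v).IsSchurMultiplicative := by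
  refine isSchurMultiplicative_iff.mpr fun i j k => ?_
  simp only [vecMulVec_apply]
  linear_combination (-(v i * v j)) * hv k

theorem injOn_vecMulVec_self (i₀ : ι) :
    Set.InjOn (fun v : ι → R => vecMulVec v v) {v | v i₀ = 1} := by
  intro v hv w hw h
  funext j
  simpa [vecMulVec_apply, hv.out, hw.out] using congr_fun₂ h i₀ j

end Factorization

theorem ncard_signVectors [Fintype ι] [DecidableEq ι] [Ring R] [NoZeroDivisors R]
    (hR : (-1 : R) ≠ 1) (i₀ : ι) :
    {v : ι → R | v i₀ = 1 ∧ ∀ i, v i * v i = 1}.ncard = 2 ^ (Fintype.card ι - 1) := by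
  have hset : {v : ι → R | v i₀ = 1 ∧ ∀ i, v i * v i = 1} =
      Set.univ.pi fun i => if i = i₀ then {1} else {1, -1} := by
    ext v
    simp only [Set.mem_ofPred_eq, Set.mem_univ_pi, mul_self_eq_one_iff]
    constructor
    · rintro ⟨h₀, hv⟩ i
      split_ifs with hi
      · exact hi ▸ h₀
      · exact hv i
    · intro hv
      refine ⟨by simpa using hv i₀, fun i => ?_⟩
      have hvi := hv i
      split_ifs at hvi
      exacts [Or.inl hvi, hvi]
  have hpair : ∀ i ∈ ({i₀}ᶜ : Finset ι), (if i = i₀ then {1} else {1, -1} : Set R).encard = 2 :=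
    fun i hi => by
      rw [if_neg (Finset.mem_compl.mp hi ∘ Finset.mem_singleton.mpr), Set.encard_pair hR.symm]
  rw [hset, Set.ncard_def, Set.encard_pi_eq_prod_encard, Fintype.prod_eq_mul_prod_compl i₀,
    if_pos rfl, Set.encard_singleton, one_mul, Finset.prod_congr rfl hpair, Finset.prod_const,
    Finset.card_compl, Finset.card_singleton]
  simp

theorem setOf_posSemidef_isSchurMultiplicative_eq_image [Fintype ι] [DecidableEq ι] (i₀ : ι) :
    {A : Matrix ι ι ℝ | A ≠ 0 ∧ A.PosSemidef ∧ A.IsSchurMultiplicative} =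
      (fun v => vecMulVec v v) '' {v | v i₀ = 1 ∧ ∀ i, v i * v i = 1} := by
  ext A
  constructor
  · rintro ⟨hA0, hpsd, hmul⟩
    have hS : A.IsSymm := (conjTranspose_eq_transpose_of_trivial A).symm.trans hpsd.isHermitian
    have hA := isSchurMultiplicative_iff.mp hmul
    have hdiag := diag_eq_one_of_forall_eq_mul hS hA hA0
    refine ⟨A i₀, ⟨hdiag i₀, fun i => ?_⟩, (eq_vecMulVec_row_of_forall_eq_mul hS hA i₀).symm⟩
    rw [← hdiag i₀, hA i₀ i₀ i, hS.apply i₀ i]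
  · rintro ⟨v, ⟨hv₀, hv⟩, rfl⟩
    refine ⟨fun h => ?_, by simpa using posSemidef_vecMulVec_self_star v,
      isSchurMultiplicative_vecMulVec_self hv⟩
    simpa [vecMulVec_apply, hv₀] using congr_fun₂ h i₀ i₀

end Matrix

theorem card_posSemidef_schur_multiplicative_real (n : ℕ) (hn : 0 < n) :
    Set.ncard {A : Matrix (Fin n) (Fin n) ℝ | A ≠ 0 ∧ A.PosSemidef ∧
      ∀ B C : Matrix (Fin n) (Fin n) ℝ,
        Matrix.hadamard A (B * C) = Matrix.hadamard A B * Matrix.hadamard A C} =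
      2 ^ (n - 1) := by
  let i₀ : Fin n := ⟨0, hn⟩
  calc _ = ((fun v => vecMulVec v v) '' {v : Fin n → ℝ | v i₀ = 1 ∧ ∀ i, v i * v i = 1}).ncard :=
        congrArg Set.ncard (setOf_posSemidef_isSchurMultiplicative_eq_image i₀)
    _ = {v : Fin n → ℝ | v i₀ = 1 ∧ ∀ i, v i * v i = 1}.ncard :=
        ((injOn_vecMulVec_self i₀).mono fun _ hv => hv.1).ncard_image
    _ = 2 ^ (n - 1) := by rw [ncard_signVectors (by norm_num), Fintype.card_fin]
end
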